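/- For every ℓ with 0 < ℓ < 2·arsinh(1) and every s ∈ [−X(ℓ), X(ℓ)], the conformal factor ρ_ℓ(s) = ℓ/(2π·cos(ℓ·s/(2π))) satisfies ρ_ℓ(s) ≤ ℓ/(2π·tanh(ℓ/2)), and moreover 1/π < ℓ/(2π·tanh(ℓ/2)) < (√2·arsinh(1))/π. -/

import Mathlib

/-- Half-length of the hyperbolic collar around a geodesic of length `ℓ`. -/
noncomputable def collarX (ℓ : ℝ) : ℝ :=
  2 * Real.pi / ℓ * (Real.pi / 2 - Real.arctan (Real.sinh (ℓ / 2)))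

/-- Conformal factor of the hyperbolic collar. -/
noncomputable def collarRho (ℓ s : ℝ) : ℝ :=
  ℓ / (2 * Real.pi * Real.cos (ℓ * s / (2 * Real.pi)))

/-!
On the collar, `|ℓ s / 2π| ≤ π/2 - arctan (sinh (ℓ/2))`, and the cosine of the right-hand side is
`tanh (ℓ/2)`, so `ρ_ℓ` is largest at the ends of the collar. Writing `t = ℓ/2`, the bound equals
`(t / tanh t) / π`; the function `t ↦ t / tanh t` increases from `1` (as `tanh t < t`) and takes the
value `√2 · arsinh 1` at `t = arsinh 1`, where `cosh t = √2`.
-/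

open Real Set

namespace Real

theorem tanh_pos {x : ℝ} (hx : 0 < x) : 0 < tanh x := by
  rw [tanh_eq_sinh_div_cosh]
  exact div_pos (sinh_pos_iff.mpr hx) (cosh_pos x)

theorem sinh_lt_self_mul_cosh {x : ℝ} (hx : 0 < x) : sinh x < x * cosh x := by
  have hmono : StrictMonoOn (fun t => t * cosh t - sinh t) (Ici 0) := by
    refine strictMonoOn_of_deriv_pos (convex_Ici 0) (by fun_prop) fun y hy => ?_
    rw [interior_Ici, mem_Ioi] at hy
    have hd : HasDerivAt (fun t => t * cosh t - sinh t) (y * sinh y) y :=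
      (((hasDerivAt_id' y).mul (hasDerivAt_cosh y)).sub (hasDerivAt_sinh y)).congr_deriv (by ring)
    rw [hd.deriv]
    exact mul_pos hy (sinh_pos_iff.mpr hy)
  simpa using hmono self_mem_Ici hx.le hx

theorem tanh_lt_self {x : ℝ} (hx : 0 < x) : tanh x < x := by
  rw [tanh_eq_sinh_div_cosh, div_lt_iff₀ (cosh_pos x)]
  exact sinh_lt_self_mul_cosh hx

theorem one_lt_self_div_tanh {x : ℝ} (hx : 0 < x) : 1 < x / tanh x :=
  (one_lt_div (tanh_pos hx)).mpr (tanh_lt_self hx)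

theorem strictMonoOn_self_div_tanh : StrictMonoOn (fun x => x / tanh x) (Ioi 0) := by
  simp_rw [tanh_eq_sinh_div_cosh, div_div_eq_mul_div]
  refine strictMonoOn_of_deriv_pos (convex_Ioi 0)
    (ContinuousOn.div (by fun_prop) (by fun_prop) fun y hy => (sinh_pos_iff.mpr hy).ne')
    fun y hy => ?_
  rw [interior_Ioi, mem_Ioi] at hy
  have hsinh : 0 < sinh y := sinh_pos_iff.mpr hy
  have hd : HasDerivAt (fun t => t * cosh t / sinh t) ((sinh y * cosh y - y) / sinh y ^ 2) y :=
    (((hasDerivAt_id' y).mul (hasDerivAt_cosh y)).div (hasDerivAt_sinh y) hsinh.ne').congr_deriv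
      (by simp only [Pi.mul_apply]; linear_combination (-y / sinh y ^ 2) * cosh_sq y)
  rw [hd.deriv]
  -- `sinh y * cosh y = sinh (2 y) / 2 > y`
  have hnum : y < sinh y * cosh y := by
    linarith [self_lt_sinh_iff.mpr (by linarith : 0 < 2 * y), sinh_two_mul y]
  exact div_pos (sub_pos.mpr hnum) (pow_pos hsinh 2)

theorem arsinh_one_div_tanh_arsinh_one : arsinh 1 / tanh (arsinh 1) = √2 * arsinh 1 := by
  rw [tanh_arsinh]
  norm_num
  ring

theorem cos_pi_div_two_sub_arctan_sinh (x : ℝ) : cos (π / 2 - arctan (sinh x)) = tanh x := by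
  rw [cos_pi_div_two_sub, sin_arctan, tanh_eq_sinh_div_cosh, ← cosh_sq', sqrt_sq (cosh_pos x).le]

end Real

theorem mul_collarX_div_two_pi {ℓ : ℝ} (hℓ : ℓ ≠ 0) :
    ℓ * collarX ℓ / (2 * π) = π / 2 - arctan (sinh (ℓ / 2)) := by
  unfold collarX
  field_simp

theorem tanh_half_le_cos_of_mem_collar {ℓ s : ℝ} (hℓ : 0 < ℓ)
    (hs : s ∈ Icc (-collarX ℓ) (collarX ℓ)) : tanh (ℓ / 2) ≤ cos (ℓ * s / (2 * π)) := by
  have harctan : 0 < arctan (sinh (ℓ / 2)) := by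
    simpa using arctan_strictMono (sinh_pos_iff.mpr (half_pos hℓ))
  have habs : |ℓ * s / (2 * π)| ≤ π / 2 - arctan (sinh (ℓ / 2)) := by
    rw [← mul_collarX_div_two_pi hℓ.ne', abs_div, abs_mul, abs_of_pos hℓ, abs_of_pos two_pi_pos]
    gcongr
    exact abs_le.mpr hs
  rw [← cos_abs, ← cos_pi_div_two_sub_arctan_sinh]
  exact cos_le_cos_of_nonneg_of_le_pi (abs_nonneg _) (by linarith [pi_pos]) habs

theorem collarRho_le {ℓ s : ℝ} (hℓ : 0 < ℓ) (hs : s ∈ Icc (-collarX ℓ) (collarX ℓ)) :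
    collarRho ℓ s ≤ ℓ / (2 * π * tanh (ℓ / 2)) := by
  have := tanh_pos (half_pos hℓ)
  unfold collarRho
  gcongr
  exact tanh_half_le_cos_of_mem_collar hℓ hs

theorem collarRho_range (ℓ : ℝ) (h0 : 0 < ℓ) (h1 : ℓ < 2 * Real.arsinh 1) :
    (∀ s ∈ Set.Icc (-(collarX ℓ)) (collarX ℓ),
      collarRho ℓ s ≤ ℓ / (2 * Real.pi * Real.tanh (ℓ / 2))) ∧
    1 / Real.pi < ℓ / (2 * Real.pi * Real.tanh (ℓ / 2)) ∧
    ℓ / (2 * Real.pi * Real.tanh (ℓ / 2)) < Real.sqrt 2 * Real.arsinh 1 / Real.pi := by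
  have hbound : ℓ / (2 * π * tanh (ℓ / 2)) = ℓ / 2 / tanh (ℓ / 2) / π := by ring
  refine ⟨fun s hs => collarRho_le h0 hs, ?_, ?_⟩
  · rw [hbound]
    exact div_lt_div_of_pos_right (one_lt_self_div_tanh (half_pos h0)) pi_pos
  · rw [hbound, ← arsinh_one_div_tanh_arsinh_one]
    have harsinh : 0 < arsinh 1 := arsinh_pos_iff.mpr one_pos
    refine div_lt_div_of_pos_right (strictMonoOn_self_div_tanh (half_pos h0) harsinh ?_) pi_pos
    linarith
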